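/- arXiv:1111.2313 — 2 statements merged into one kernel-verified Lean document; each statement's English description precedes it below -/
import Mathlib

section
/- Absence of regulation implies the M-relation: for subsets X_i, X_j of agents, if X_j does not regulate X_i, then X_i ⤳ X_j. -/
variable {A : Type*} {St : A → Type*}

/-- Orbit operator. -/
def orbit {S : Type*} (r : S → S → Prop) (T : Set S) : Set S :=
  {s' | ∃ s ∈ T, Relation.ReflTransGen r s s'}

/-- Equilibria operator. -/
def equil {S : Type*} (r : S → S → Prop) (T : Set S) : Set S :=
  {s | s ∈ orbit r T ∧ ∀ s', Relation.ReflTransGen r s s' → Relation.ReflTransGen r s' s}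

/-- The relation `→_X` induced by a set `X` of agents. -/
def relOf {S : Type*} (rel : A → S → S → Prop) (X : Set A) : S → S → Prop :=
  fun s t => ∃ a ∈ X, rel a s t

/-- Agent `k` regulates agent `l`: two states agreeing everywhere except possibly on
component `k` have `→_l`-images whose restrictions to component `l` differ. -/
def reg (rel : A → (∀ a, St a) → (∀ a, St a) → Prop) (k l : A) : Prop :=
  ∃ s s' : ∀ a, St a, (∀ b, b ≠ k → s b = s' b) ∧
    ((fun t => t l) '' {t | rel l s t}) ≠ ((fun t => t l) '' {t | rel l s' t})

/-- Regulation between sets of agents: some agent of `Xj` regulates some agent of `Xi`. -/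
def regSet (rel : A → (∀ a, St a) → (∀ a, St a) → Prop) (Xj Xi : Set A) : Prop :=
  ∃ k ∈ Xj, ∃ l ∈ Xi, reg rel k l

/-- The M-relation `X_i ⤳ X_j` (image formulation). -/
def mrelI {S : Type*} (rel : A → S → S → Prop) (Xi Xj : Set A) : Prop :=
  ∀ T : Set S, ∀ s ∈ equil (relOf rel Xi) (equil (relOf rel (Xi ∪ Xj)) T),
    ∀ s', relOf rel Xj s s' →
      s' ∈ equil (relOf rel Xi) (equil (relOf rel (Xi ∪ Xj)) T)

private lemma step_sim (rel : A → (∀ a, St a) → (∀ a, St a) → Prop)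
    (hloc : ∀ a s t, rel a s t → ∀ b, b ≠ a → t b = s b)
    {Xi Xj : Set A} (hreg : ¬ regSet rel Xj Xi) {k : A} (hk : k ∈ Xj)
    {x x' y : ∀ a, St a} {l : A} (hl : l ∈ Xi)
    (hagree : ∀ b, b ≠ k → x b = x' b) (hxy : rel l x y) :
    ∃ y', rel l x' y' ∧ ∀ b, b ≠ k → y b = y' b := by
  have hnr : ¬ reg rel k l := fun h => hreg ⟨k, hk, l, hl, h⟩
  have himg : ((fun t => t l) '' {t | rel l x t}) = ((fun t => t l) '' {t | rel l x' t}) := by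
    by_contra h; exact hnr ⟨x, x', hagree, h⟩
  have hmem : (fun t => t l) y ∈ (fun t => t l) '' {t | rel l x' t} := by
    rw [← himg]; exact ⟨y, hxy, rfl⟩
  obtain ⟨w, hw, hwl⟩ := hmem
  refine ⟨w, hw, fun b hb => ?_⟩
  by_cases hbl : b = l
  · subst hbl; exact hwl.symm
  · rw [hloc l x y hxy b hbl, hagree b hb, ← hloc l x' w hw b hbl]

private lemma path_sim (rel : A → (∀ a, St a) → (∀ a, St a) → Prop)
    (hloc : ∀ a s t, rel a s t → ∀ b, b ≠ a → t b = s b)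
    {Xi Xj : Set A} (hreg : ¬ regSet rel Xj Xi) {k : A} (hk : k ∈ Xj)
    {x v : ∀ a, St a} (h : Relation.ReflTransGen (relOf rel Xi) x v) :
    ∀ {x' : ∀ a, St a}, (∀ b, b ≠ k → x b = x' b) →
      ∃ v', Relation.ReflTransGen (relOf rel Xi) x' v' ∧ ∀ b, b ≠ k → v b = v' b := by
  induction h with
  | refl => exact fun ha => ⟨_, .refl, ha⟩
  | tail hxv hvw ih =>
      intro x' ha
      obtain ⟨v', hv', hav⟩ := ih ha
      obtain ⟨l, hl, hrel⟩ := hvw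
      obtain ⟨w', hw', haw⟩ := step_sim rel hloc hreg hk hl hav hrel
      exact ⟨w', hv'.tail ⟨l, hl, hw'⟩, haw⟩

theorem non_regulation_implies_mrel
    (rel : A → (∀ a, St a) → (∀ a, St a) → Prop) [Finite (∀ a, St a)]
    (hloc : ∀ a s t, rel a s t → ∀ b, b ≠ a → t b = s b)
    (Xi Xj : Set A) (hreg : ¬ regSet rel Xj Xi) :
    mrelI rel Xi Xj := by
  intro T s hs s' hss'
  obtain ⟨k, hk, hrelk⟩ := hss'
  obtain ⟨⟨q, hqQ, hqs⟩, srec⟩ := hs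
  have hsub : ∀ u v : ∀ a, St a, Relation.ReflTransGen (relOf rel Xi) u v →
      Relation.ReflTransGen (relOf rel (Xi ∪ Xj)) u v := by
    intro u v h
    exact Relation.ReflTransGen.mono (p := relOf rel (Xi ∪ Xj))
      (fun a b (hab : relOf rel Xi a b) => by obtain ⟨l, hl, hr⟩ := hab; exact ⟨l, Or.inl hl, hr⟩) u v h
  have hstep : relOf rel (Xi ∪ Xj) s s' := ⟨k, Or.inr hk, hrelk⟩
  have hagree : ∀ b, b ≠ k → s b = s' b := fun b hb => (hloc k s s' hrelk b hb).symm
  by_cases hkXi : k ∈ Xi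
  · -- the Xj-step is also an Xi-step
    have hstep' : Relation.ReflTransGen (relOf rel Xi) s s' :=
      Relation.ReflTransGen.single ⟨k, hkXi, hrelk⟩
    refine ⟨⟨q, hqQ, hqs.trans hstep'⟩, fun u hu => ?_⟩
    exact (srec u (hstep'.trans hu)).trans hstep'
  · -- s' is itself in Q
    obtain ⟨⟨t0, ht0, htq⟩, qrec⟩ := hqQ
    have hqs' : Relation.ReflTransGen (relOf rel (Xi ∪ Xj)) q s' :=
      (hsub _ _ hqs).tail hstep
    have hs'Q : s' ∈ equil (relOf rel (Xi ∪ Xj)) T := by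
      refine ⟨⟨t0, ht0, htq.trans hqs'⟩, fun u hu => ?_⟩
      exact (qrec u (hqs'.trans hu)).trans hqs'
    refine ⟨⟨s', hs'Q, .refl⟩, fun u hu => ?_⟩
    -- Xi-paths preserve the k-coordinate
    have hpres : ∀ {a b : ∀ x, St x}, Relation.ReflTransGen (relOf rel Xi) a b → b k = a k := by
      intro a b h
      induction h with
      | refl => rfl
      | tail _ hbc ih =>
          obtain ⟨l, hl, hr⟩ := hbc
          have : l ≠ k := fun h => hkXi (h ▸ hl)
          rw [hloc l _ _ hr k (Ne.symm this), ih]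
    have hagree' : ∀ b, b ≠ k → s' b = s b := fun b hb => (hagree b hb).symm
    obtain ⟨u₂, hu₂, hau₂⟩ := path_sim rel hloc hreg hk hu hagree'
    have hu₂s : Relation.ReflTransGen (relOf rel Xi) u₂ s := srec u₂ hu₂
    have hau : ∀ b, b ≠ k → u₂ b = u b := fun b hb => (hau₂ b hb).symm
    obtain ⟨w, hw, haw⟩ := path_sim rel hloc hreg hk hu₂s hau
    have hws' : w = s' := by
      funext b
      by_cases hb : b = k
      · subst hb
        rw [hpres hw, hpres hu]
      · rw [← haw b hb, ← hagree b hb]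
    rw [← hws']
    exact hw
end

section
/- Any topological ordering of the strongly-connected-component quotient of the regulation graph is a modular organisation: if (X_1, …, X_m) is an ordered partition of the agents such that for all i ≤ j there is no regulation of X_i by X_j (¬(X_j ⊳ X_i) for i ≤ j), then for every i, (⋃_{k<i} X_k) ⤳ X_i. -/
variable {A : Type*} {St : A → Type*}

section Aux

variable (rel : A → (∀ a, St a) → (∀ a, St a) → Prop)

lemma update_step [DecidableEq A]
    (hloc : ∀ a s t, rel a s t → ∀ b, b ≠ a → t b = s b)
    {Xi Xj : Set A} (hd : Disjoint Xi Xj) (hnr : ¬ regSet rel Xj Xi)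
    {a : A} (ha : a ∈ Xj) (c : St a) :
    ∀ u v, relOf rel Xi u v →
      relOf rel Xi (Function.update u a c) (Function.update v a c) := by
  rintro u v ⟨l, hl, hrel⟩
  have hal : a ≠ l := fun h => (Set.disjoint_right.mp hd ha) (h ▸ hl)
  have himg : ((fun t => t l) '' {t | rel l u t})
      = ((fun t => t l) '' {t | rel l (Function.update u a c) t}) := by
    by_contra h
    exact hnr ⟨a, ha, l, hl, u, Function.update u a c,
      fun b hb => (Function.update_of_ne hb c u).symm, h⟩
  have hmem : v l ∈ ((fun t => t l) '' {t | rel l (Function.update u a c) t}) := by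
    rw [← himg]; exact ⟨v, hrel, rfl⟩
  obtain ⟨t, ht, htl⟩ := hmem
  refine ⟨l, hl, ?_⟩
  have heq : t = Function.update v a c := by
    funext b
    by_cases hba : b = a
    · subst hba
      rw [hloc l _ _ ht b hal, Function.update_self, Function.update_self]
    · by_cases hbl : b = l
      · subst hbl
        rw [Function.update_of_ne hba]
        exact htl
      · rw [hloc l _ _ ht b hbl, Function.update_of_ne hba,
          Function.update_of_ne hba, hloc l _ _ hrel b hbl]
  exact heq ▸ ht

lemma update_rtg [DecidableEq A]
    (hloc : ∀ a s t, rel a s t → ∀ b, b ≠ a → t b = s b)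
    {Xi Xj : Set A} (hd : Disjoint Xi Xj) (hnr : ¬ regSet rel Xj Xi)
    {a : A} (ha : a ∈ Xj) (c : St a) {u v : ∀ a, St a}
    (h : Relation.ReflTransGen (relOf rel Xi) u v) :
    Relation.ReflTransGen (relOf rel Xi)
      (Function.update u a c) (Function.update v a c) := by
  induction h with
  | refl => exact Relation.ReflTransGen.refl
  | tail _ hstep ih =>
      exact ih.tail (update_step rel hloc hd hnr ha c _ _ hstep)

lemma comp_fix_rtg
    (hloc : ∀ a s t, rel a s t → ∀ b, b ≠ a → t b = s b)
    {Xi : Set A} {a : A} (ha : a ∉ Xi) {u v : ∀ a, St a}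
    (h : Relation.ReflTransGen (relOf rel Xi) u v) : v a = u a := by
  induction h with
  | refl => rfl
  | tail _ hstep ih =>
      obtain ⟨l, hl, hrel⟩ := hstep
      rw [hloc l _ _ hrel a (fun h => ha (h ▸ hl)), ih]

lemma mrel_of_not_reg
    (hloc : ∀ a s t, rel a s t → ∀ b, b ≠ a → t b = s b)
    {Xi Xj : Set A} (hd : Disjoint Xi Xj) (hnr : ¬ regSet rel Xj Xi) :
    mrelI rel Xi Xj := by
  classical
  intro T s hs s' hstep
  obtain ⟨a, ha, hr⟩ := hstep
  have haXi : a ∉ Xi := Set.disjoint_right.mp hd ha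
  have hoff : ∀ b, b ≠ a → s' b = s b := fun b hb => hloc a s s' hr b hb
  have hupd_s' : Function.update s a (s' a) = s' := by
    funext b
    by_cases hba : b = a
    · subst hba; rw [Function.update_self]
    · rw [Function.update_of_ne hba, hoff b hba]
  have hupd_s : Function.update s' a (s a) = s := by
    funext b
    by_cases hba : b = a
    · subst hba; rw [Function.update_self]
    · rw [Function.update_of_ne hba, hoff b hba]
  obtain ⟨⟨e, he, hes⟩, hrec⟩ := hs
  have hsub : ∀ u v, relOf rel Xi u v → relOf rel (Xi ∪ Xj) u v := by
    rintro u v ⟨l, hl, h⟩; exact ⟨l, Or.inl hl, h⟩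
  have hes' : Relation.ReflTransGen (relOf rel (Xi ∪ Xj)) e s' :=
    (Relation.ReflTransGen.mono hsub _ _ hes).tail ⟨a, Or.inr ha, hr⟩
  have hs'eq : s' ∈ equil (relOf rel (Xi ∪ Xj)) T := by
    obtain ⟨⟨t0, ht0, h0e⟩, herec⟩ := he
    refine ⟨⟨t0, ht0, h0e.trans hes'⟩, fun w hw => ?_⟩
    exact (herec w (hes'.trans hw)).trans hes'
  refine ⟨⟨s', hs'eq, Relation.ReflTransGen.refl⟩, fun w hw => ?_⟩
  have hwa : w a = s' a := comp_fix_rtg rel hloc haXi hw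
  have h1 : Relation.ReflTransGen (relOf rel Xi) s (Function.update w a (s a)) := by
    have := update_rtg rel hloc hd hnr ha (s a) hw
    rwa [hupd_s] at this
  have h2 := hrec _ h1
  have h3 := update_rtg rel hloc hd hnr ha (s' a) h2
  rwa [Function.update_idem, hupd_s', show Function.update w a (s' a) = w by
    rw [← hwa, Function.update_eq_self]] at h3

end Aux

theorem topological_ordering_is_modular_organisation
    (rel : A → (∀ a, St a) → (∀ a, St a) → Prop) [Finite (∀ a, St a)]
    (hloc : ∀ a s t, rel a s t → ∀ b, b ≠ a → t b = s b)
    (m : ℕ) (X : ℕ → Set A)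
    (hdisj : ∀ k l, k < m → l < m → k ≠ l → Disjoint (X k) (X l))
    (hcover : (⋃ k ∈ Set.Iio m, X k) = Set.univ)
    (htopo : ∀ i j, i ≤ j → j < m → ¬ regSet rel (X j) (X i)) :
    ∀ i < m, mrelI rel (⋃ k ∈ Set.Iio i, X k) (X i) := by
  intro i hi
  apply mrel_of_not_reg rel hloc
  · rw [Set.disjoint_left]
    rintro b hb hbi
    simp only [Set.mem_iUnion, Set.mem_Iio] at hb
    obtain ⟨k, hk, hbk⟩ := hb
    exact Set.disjoint_left.mp
      (hdisj k i (hk.trans hi) hi (Nat.ne_of_lt hk)) hbk hbi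
  · rintro ⟨k, hk, l, hl, hreg⟩
    simp only [Set.mem_iUnion, Set.mem_Iio] at hl
    obtain ⟨k', hk', hlk'⟩ := hl
    exact htopo k' i (le_of_lt hk') hi ⟨k, hk, l, hlk', hreg⟩
end
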